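/- Let n ≥ 1, r > 0, let ν_n denote the volume of the unit ball in ℝⁿ, and define the kernel k_r(x, y) = r^{−n} ψ(‖x − y‖ / r) on ℝⁿ × ℝⁿ, where ψ(t) = ((n+2)/(2ν_n))·(1 − t²) for 0 ≤ t ≤ 1 and ψ(t) = 0 for t > 1. Let f : ℝⁿ → ℝ be continuous with compact support and define Λ_r f(x) = ∫_{ℝⁿ} k_r(x, y) f(y) dy. Then Λ_r f is differentiable with gradient ∇(Λ_r f)(x) = ((n+2)/(ν_n r^{n+2})) · ∫_{B_r(x)} (y − x)·( f(y) − f(x) ) dy, and ∫_{ℝⁿ} ‖∇(Λ_r f)(x)‖² dx ≤ ((n+2)/(ν_n r^{n+2})) · ∫_{ℝⁿ} ∫_{B_r(x)} ( f(y) − f(x) )² dy dx. -/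

import Mathlib

open MeasureTheory Metric
open scoped RealInnerProductSpace

variable {n : ℕ}

private lemma intOn_ball {E : Type*} [NormedAddCommGroup E]
    {g : EuclideanSpace ℝ (Fin n) → E} (hg : Continuous g)
    (x : EuclideanSpace ℝ (Fin n)) (r : ℝ) : IntegrableOn g (ball x r) :=
  (hg.continuousOn.integrableOn_compact (isCompact_closedBall x r)).mono_set
    ball_subset_closedBall

private lemma shift_int {E : Type*} [NormedAddCommGroup E] [NormedSpace ℝ E]
    (g : EuclideanSpace ℝ (Fin n) → E) (x : EuclideanSpace ℝ (Fin n)) (r : ℝ) :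
    ∫ y in ball x r, g (y - x) = ∫ z in ball (0 : EuclideanSpace ℝ (Fin n)) r, g z := by
  rw [← integral_indicator measurableSet_ball, ← integral_indicator measurableSet_ball,
    ← integral_add_right_eq_self _ x]
  congr 1; ext z
  by_cases hz : z ∈ ball (0 : EuclideanSpace ℝ (Fin n)) r
  · have hz' : z + x ∈ ball x r := by
      simp only [mem_ball, dist_eq_norm, sub_zero] at hz ⊢; simpa using hz
    simp [Set.indicator_of_mem hz', Set.indicator_of_mem hz]
  · have hz' : z + x ∉ ball x r := by
      simp only [mem_ball, dist_eq_norm, sub_zero] at hz ⊢; simpa using hz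
    simp [Set.indicator_of_notMem hz', Set.indicator_of_notMem hz]

private lemma ball_mean_zero (x : EuclideanSpace ℝ (Fin n)) (r : ℝ) :
    ∫ y in ball x r, (y - x) = (0 : EuclideanSpace ℝ (Fin n)) := by
  rw [shift_int (fun z => z) x r]
  have h2 : ∫ z in ball (0 : EuclideanSpace ℝ (Fin n)) r, z
      = - ∫ z in ball (0 : EuclideanSpace ℝ (Fin n)) r, z := by
    rw [← integral_neg, ← integral_indicator measurableSet_ball,
      ← integral_indicator measurableSet_ball, ← integral_neg_eq_self]
    congr 1; ext z
    by_cases hz : z ∈ ball (0 : EuclideanSpace ℝ (Fin n)) r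
    · have : -z ∈ ball (0 : EuclideanSpace ℝ (Fin n)) r := by
        simpa [mem_ball, dist_eq_norm] using hz
      simp [Set.indicator_of_mem this, Set.indicator_of_mem hz]
    · have : -z ∉ ball (0 : EuclideanSpace ℝ (Fin n)) r := by
        simpa [mem_ball, dist_eq_norm] using hz
      simp [Set.indicator_of_notMem this, Set.indicator_of_notMem hz]
  have h3 : (2:ℝ) • (∫ z in ball (0 : EuclideanSpace ℝ (Fin n)) r, z) = 0 := by
    rw [two_smul]; nth_rewrite 1 [h2]; simp
  simpa using h3
private lemma inv_int (r : ℝ) (u u' : EuclideanSpace ℝ (Fin n)) (hu : ‖u‖ = ‖u'‖) :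
    ∫ z in ball (0 : EuclideanSpace ℝ (Fin n)) r, ⟪z, u⟫ ^ 2
      = ∫ z in ball (0 : EuclideanSpace ℝ (Fin n)) r, ⟪z, u'⟫ ^ 2 := by
  set A := Submodule.reflection (ℝ ∙ (u - u'))ᗮ with hA
  have hAu : A u = u' := Submodule.reflection_sub hu
  have hmp : MeasurePreserving A volume volume := A.measurePreserving
  have hemb : MeasurableEmbedding A := A.toHomeomorph.measurableEmbedding
  have hball : A ⁻¹' (ball (0 : EuclideanSpace ℝ (Fin n)) r) = ball 0 r := by
    ext z; simp [mem_ball, dist_eq_norm, A.norm_map]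
  calc ∫ z in ball (0 : EuclideanSpace ℝ (Fin n)) r, ⟪z, u⟫ ^ 2
      = ∫ z in A ⁻¹' (ball (0 : EuclideanSpace ℝ (Fin n)) r), ⟪A z, u'⟫ ^ 2 := by
        rw [hball]; congr 1; ext z; rw [← hAu, A.inner_map_map]
    _ = ∫ z in ball (0 : EuclideanSpace ℝ (Fin n)) r, ⟪z, u'⟫ ^ 2 :=
        hmp.setIntegral_preimage_emb hemb (fun z => ⟪z, u'⟫ ^ 2) _

private lemma normsq_int (hn : 1 ≤ n) (r : ℝ) (hr : 0 < r) :
    ∫ z in ball (0 : EuclideanSpace ℝ (Fin n)) r, ‖z‖ ^ 2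
      = (n : ℝ) * (volume (ball (0 : EuclideanSpace ℝ (Fin n)) 1)).toReal
        * (r ^ (n + 2) / (n + 2)) := by
  haveI : Nontrivial (EuclideanSpace ℝ (Fin n)) := by
    have : 0 < Module.finrank ℝ (EuclideanSpace ℝ (Fin n)) := by
      rw [finrank_euclideanSpace_fin]; exact hn
    exact Module.nontrivial_of_finrank_pos this
  have key := MeasureTheory.integral_fun_norm_addHaar
    (volume : Measure (EuclideanSpace ℝ (Fin n)))
    (fun t : ℝ => if t < r then t ^ 2 else 0)
  have hdim : Module.finrank ℝ (EuclideanSpace ℝ (Fin n)) = n := finrank_euclideanSpace_fin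
  rw [hdim] at key
  have hL : ∫ z in ball (0 : EuclideanSpace ℝ (Fin n)) r, ‖z‖ ^ 2
      = ∫ x : EuclideanSpace ℝ (Fin n), (if ‖x‖ < r then ‖x‖ ^ 2 else 0) := by
    rw [← integral_indicator measurableSet_ball]
    congr 1; ext z
    by_cases hz : z ∈ ball (0 : EuclideanSpace ℝ (Fin n)) r
    · simp only [mem_ball, dist_eq_norm, sub_zero] at hz
      simp [Set.indicator_of_mem, hz, mem_ball, dist_eq_norm]
    · simp only [mem_ball, dist_eq_norm, sub_zero] at hz
      simp [Set.indicator_of_notMem, hz, mem_ball, dist_eq_norm]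
  have hR : ∫ y in Set.Ioi (0:ℝ), y ^ (n - 1) • (if y < r then y ^ 2 else 0)
      = r ^ (n + 2) / (n + 2) := by
    have h1 : ∫ y in Set.Ioi (0:ℝ), y ^ (n - 1) • (if y < r then y ^ 2 else 0)
        = ∫ y in Set.Ioo (0:ℝ) r, y ^ (n + 1) := by
      rw [← integral_indicator measurableSet_Ioo, ← integral_indicator measurableSet_Ioi]
      congr 1; ext y
      by_cases hy : y ∈ Set.Ioo (0:ℝ) r
      · obtain ⟨hy1, hy2⟩ := hy
        rw [Set.indicator_of_mem (Set.mem_Ioo.mpr ⟨hy1, hy2⟩),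
          Set.indicator_of_mem (Set.mem_Ioi.mpr hy1)]
        rw [if_pos hy2, smul_eq_mul, ← pow_add]
        congr 1; omega
      · rw [Set.indicator_of_notMem hy]
        by_cases hy1 : y ∈ Set.Ioi (0:ℝ)
        · rw [Set.indicator_of_mem hy1]
          have : ¬ y < r := by
            simp only [Set.mem_Ioo, not_and] at hy
            exact fun h => absurd (hy (Set.mem_Ioi.mp hy1)) (not_not.mpr h)
          rw [if_neg this, smul_zero]
        · rw [Set.indicator_of_notMem hy1]
    rw [h1, ← MeasureTheory.integral_Ioc_eq_integral_Ioo,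
      ← intervalIntegral.integral_of_le hr.le, integral_pow]
    push_cast; ring
  rw [hL, key, hR, nsmul_eq_mul, smul_eq_mul, measureReal_def]; ring

private lemma moment (hn : 1 ≤ n) (r : ℝ) (hr : 0 < r) (e : EuclideanSpace ℝ (Fin n)) :
    ∫ z in ball (0 : EuclideanSpace ℝ (Fin n)) r, ⟪z, e⟫ ^ 2
      = ‖e‖ ^ 2 * ((volume (ball (0 : EuclideanSpace ℝ (Fin n)) 1)).toReal
        * (r ^ (n + 2) / (n + 2))) := by
  by_cases he : e = 0
  · simp [he]
  set ν := (volume (ball (0 : EuclideanSpace ℝ (Fin n)) 1)).toReal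
  set u : EuclideanSpace ℝ (Fin n) := ‖e‖⁻¹ • e with hu_def
  have hne : ‖e‖ ≠ 0 := norm_ne_zero_iff.mpr he
  have hu : ‖u‖ = 1 := by
    rw [hu_def, norm_smul, norm_inv, norm_norm, inv_mul_cancel₀ hne]
  set I := ∫ z in ball (0 : EuclideanSpace ℝ (Fin n)) r, ⟪z, u⟫ ^ 2 with hI_def
  have hdim : Module.finrank ℝ (EuclideanSpace ℝ (Fin n)) = n := finrank_euclideanSpace_fin
  set b := stdOrthonormalBasis ℝ (EuclideanSpace ℝ (Fin n)) with hb
  have hbi : ∀ i, ∫ z in ball (0 : EuclideanSpace ℝ (Fin n)) r, ⟪z, b i⟫ ^ 2 = I := fun i =>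
    inv_int r (b i) u (by rw [hu, (stdOrthonormalBasis ℝ _).orthonormal.1 i])
  have hsum : ∀ z : EuclideanSpace ℝ (Fin n), ∑ i, ⟪z, b i⟫ ^ 2 = ‖z‖ ^ 2 := by
    intro z
    have := b.sum_inner_mul_inner z z
    rw [real_inner_self_eq_norm_sq] at this
    rw [← this]
    congr 1; ext i; rw [sq, real_inner_comm (b i) z]
  have hintSum : ∫ z in ball (0 : EuclideanSpace ℝ (Fin n)) r, ‖z‖ ^ 2
      = ∑ i : Fin (Module.finrank ℝ (EuclideanSpace ℝ (Fin n))),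
        ∫ z in ball (0 : EuclideanSpace ℝ (Fin n)) r, ⟪z, b i⟫ ^ 2 := by
    rw [← integral_finset_sum]
    · congr 1; ext z; rw [hsum]
    · intro i _
      exact intOn_ball ((continuous_id.inner continuous_const).pow 2) 0 r
  have hI : (n : ℝ) * I = (n : ℝ) * (ν * (r ^ (n + 2) / (n + 2))) := by
    have := normsq_int hn r hr
    rw [hintSum] at this
    simp only [hbi, Finset.sum_const, Finset.card_univ, Fintype.card_fin, hdim,
      nsmul_eq_mul] at this
    rw [this]; ring
  have hIval : I = ν * (r ^ (n + 2) / (n + 2)) := by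
    have hn0 : (n : ℝ) ≠ 0 := by positivity
    exact mul_left_cancel₀ hn0 hI
  have he2 : ∀ z : EuclideanSpace ℝ (Fin n), ⟪z, e⟫ ^ 2 = ‖e‖ ^ 2 * ⟪z, u⟫ ^ 2 := by
    intro z
    have h : ⟪z, u⟫ = ‖e‖⁻¹ * ⟪z, e⟫ := by rw [hu_def, inner_smul_right]
    rw [h]
    field_simp
  calc ∫ z in ball (0 : EuclideanSpace ℝ (Fin n)) r, ⟪z, e⟫ ^ 2
      = ∫ z in ball (0 : EuclideanSpace ℝ (Fin n)) r, ‖e‖ ^ 2 * ⟪z, u⟫ ^ 2 := by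
        congr 1; ext z; exact he2 z
    _ = ‖e‖ ^ 2 * I := by rw [← integral_const_mul]
    _ = _ := by rw [hIval]

private lemma mlip {r : ℝ} (hr : 0 ≤ r) {a b : ℝ} (ha : 0 ≤ a) (hb : 0 ≤ b) :
    |max (r^2 - a^2) 0 - max (r^2 - b^2) 0| ≤ 2*r*|a - b| := by
  wlog hab : a ≤ b generalizing a b
  · rw [abs_sub_comm, abs_sub_comm a b]
    exact this hb ha (le_of_not_ge hab)
  have hmono : max (r^2 - b^2) 0 ≤ max (r^2 - a^2) 0 :=
    max_le_max (by nlinarith) le_rfl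
  rw [abs_of_nonneg (by linarith), abs_of_nonpos (by linarith)]
  rcases le_total b r with h2 | h2
  · have h1 : a ≤ r := le_trans hab h2
    rw [max_eq_left (by nlinarith : (0:ℝ) ≤ r^2 - a^2), max_eq_left (by nlinarith : (0:ℝ) ≤ r^2 - b^2)]
    nlinarith [mul_nonneg (sub_nonneg.mpr hab) (by linarith : (0:ℝ) ≤ 2*r - a - b)]
  · rw [max_eq_right (by nlinarith : r^2 - b^2 ≤ (0:ℝ))]
    rcases le_total a r with h1 | h1
    · rw [max_eq_left (by nlinarith : (0:ℝ) ≤ r^2 - a^2)]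
      nlinarith [mul_nonneg (sub_nonneg.mpr h1) (by linarith : (0:ℝ) ≤ r + a),
        mul_nonneg (sub_nonneg.mpr hab) hr]
    · rw [max_eq_right (by nlinarith : r^2 - a^2 ≤ (0:ℝ))]
      simp [mul_nonneg, hr, sub_nonneg.mpr hab, abs_nonneg]

private lemma grad_phi {n : ℕ} (hn : 1 ≤ n) {r : ℝ} (hr : 0 < r)
    {f : EuclideanSpace ℝ (Fin n) → ℝ} (hf : Continuous f)
    (hsupp : HasCompactSupport f) (x₀ : EuclideanSpace ℝ (Fin n)) :
    HasFDerivAt (fun x => ∫ y, max (r^2 - ‖x - y‖^2) 0 * f y)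
      (∫ y, Set.indicator (ball x₀ r)
        (fun y => (2 * f y) • (innerSL ℝ (y - x₀))) y) x₀ := by
  haveI : Nontrivial (EuclideanSpace ℝ (Fin n)) := by
    have : 0 < Module.finrank ℝ (EuclideanSpace ℝ (Fin n)) := by
      rw [finrank_euclideanSpace_fin]; exact hn
    exact Module.nontrivial_of_finrank_pos this
  have cont_m : ∀ x : EuclideanSpace ℝ (Fin n),
      Continuous fun y : EuclideanSpace ℝ (Fin n) => max (r^2 - ‖x - y‖^2) 0 := fun x =>
    ((continuous_const.sub ((continuous_const.sub continuous_id).norm.pow 2)).max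
      continuous_const)
  have hmeas : ∀ x : EuclideanSpace ℝ (Fin n),
      AEStronglyMeasurable (fun y => max (r^2 - ‖x - y‖^2) 0 * f y)
        (volume : Measure (EuclideanSpace ℝ (Fin n))) := fun x =>
    ((cont_m x).mul hf).aestronglyMeasurable
  have hFint : Integrable (fun y => max (r^2 - ‖x₀ - y‖^2) 0 * f y)
      (volume : Measure (EuclideanSpace ℝ (Fin n))) :=
    ((cont_m x₀).mul hf).integrable_of_hasCompactSupport hsupp.mul_left
  have hF'meas : AEStronglyMeasurable (fun y => Set.indicator (ball x₀ r)
      (fun y => (2 * f y) • (innerSL ℝ (y - x₀))) y)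
      (volume : Measure (EuclideanSpace ℝ (Fin n))) := by
    apply AEStronglyMeasurable.indicator _ measurableSet_ball
    apply Continuous.aestronglyMeasurable
    fun_prop
  have hlip : ∀ᵐ y : EuclideanSpace ℝ (Fin n),
      LipschitzOnWith (Real.nnabs (2 * r * |f y|))
        (fun x => max (r^2 - ‖x - y‖^2) 0 * f y) (ball x₀ 1) := by
    filter_upwards with y
    apply LipschitzOnWith.mono _ (Set.subset_univ _)
    rw [lipschitzOnWith_univ]
    apply LipschitzWith.of_dist_le_mul
    intro x x'
    simp only [Real.dist_eq]
    have heq : max (r^2 - ‖x - y‖^2) 0 * f y - max (r^2 - ‖x' - y‖^2) 0 * f y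
        = (max (r^2 - ‖x - y‖^2) 0 - max (r^2 - ‖x' - y‖^2) 0) * f y := by ring
    rw [heq, abs_mul]
    have h1 := mlip hr.le (norm_nonneg (x - y)) (norm_nonneg (x' - y))
    have h2 : |‖x - y‖ - ‖x' - y‖| ≤ ‖x - x'‖ := by
      have := abs_norm_sub_norm_le (x - y) (x' - y)
      simpa [sub_sub_sub_cancel_right] using this
    have hc : (Real.nnabs (2 * r * |f y|) : ℝ) = 2 * r * |f y| := by
      rw [Real.coe_nnabs, abs_of_nonneg (by positivity)]
    rw [hc, dist_eq_norm]
    calc |max (r^2 - ‖x - y‖^2) 0 - max (r^2 - ‖x' - y‖^2) 0| * |f y|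
        ≤ (2 * r * ‖x - x'‖) * |f y| := by
          apply mul_le_mul_of_nonneg_right _ (abs_nonneg _)
          refine le_trans h1 ?_
          have : |‖x - y‖ - ‖x' - y‖| ≤ ‖x - x'‖ := h2
          nlinarith [abs_nonneg (‖x - y‖ - ‖x' - y‖)]
      _ = 2 * r * |f y| * ‖x - x'‖ := by ring
  have hbound : Integrable (fun y => 2 * r * |f y|)
      (volume : Measure (EuclideanSpace ℝ (Fin n))) :=
    (hf.abs.integrable_of_hasCompactSupport hsupp.abs).const_mul _
  have hdiff : ∀ᵐ y : EuclideanSpace ℝ (Fin n), HasFDerivAt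
      (fun x => max (r^2 - ‖x - y‖^2) 0 * f y)
      (Set.indicator (ball x₀ r) (fun y => (2 * f y) • (innerSL ℝ (y - x₀))) y) x₀ := by
    have hsph : (volume : Measure (EuclideanSpace ℝ (Fin n))) (sphere x₀ r) = 0 :=
      Measure.addHaar_sphere (volume : Measure (EuclideanSpace ℝ (Fin n))) x₀ r
    rw [← compl_mem_ae_iff] at hsph
    filter_upwards [hsph] with y hy
    simp only [Set.mem_compl_iff, mem_sphere, not_not] at hy
    rcases lt_trichotomy (dist y x₀) r with hlt | heq | hgt
    · -- inside the ball
      have hmem : y ∈ ball x₀ r := mem_ball.mpr hlt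
      rw [Set.indicator_of_mem hmem]
      -- near x₀, the max is the left argument
      have hev : (fun x => (r^2 - ‖x - y‖^2) * f y)
          =ᶠ[nhds x₀] (fun x => max (r^2 - ‖x - y‖^2) 0 * f y) := by
        have hopen : IsOpen {x : EuclideanSpace ℝ (Fin n) | ‖x - y‖ < r} := by
          have : Continuous fun x : EuclideanSpace ℝ (Fin n) => ‖x - y‖ := by fun_prop
          exact isOpen_lt this continuous_const
        have hx₀mem : x₀ ∈ {x : EuclideanSpace ℝ (Fin n) | ‖x - y‖ < r} := by
          simpa [dist_eq_norm, norm_sub_rev x₀ y] using hlt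
        filter_upwards [hopen.mem_nhds hx₀mem] with x hx
        rw [max_eq_left (by nlinarith [norm_nonneg (x - y), hx] : (0:ℝ) ≤ r^2 - ‖x - y‖^2)]
      apply HasFDerivAt.congr_of_eventuallyEq _ hev.symm
      -- derivative of (r^2 - ‖x - y‖^2) * f y
      have hd1 : HasFDerivAt (fun x : EuclideanSpace ℝ (Fin n) => ‖x - y‖^2)
          (2 • (innerSL ℝ (x₀ - y))) x₀ := by
        have := ((hasFDerivAt_id x₀).sub_const y).norm_sq
        simpa using this
      have hd2 : HasFDerivAt (fun x : EuclideanSpace ℝ (Fin n) => (r^2 - ‖x - y‖^2) * f y)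
          ((-(f y)) • (2 • (innerSL ℝ (x₀ - y)))) x₀ := by
        have := ((hasFDerivAt_const (r^2) x₀).sub hd1).mul_const (f y)
        convert this using 1 <;> ext v <;> simp
      convert hd2 using 1
      ext v
      simp [inner_sub_left, inner_smul_left]
      ring
    · -- on the sphere: excluded
      exact absurd heq hy
    · -- outside
      have hmem : y ∉ ball x₀ r := by simp [mem_ball]; linarith
      rw [Set.indicator_of_notMem hmem]
      have hev : (fun _ : EuclideanSpace ℝ (Fin n) => (0:ℝ))
          =ᶠ[nhds x₀] (fun x => max (r^2 - ‖x - y‖^2) 0 * f y) := by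
        have hopen : IsOpen {x : EuclideanSpace ℝ (Fin n) | r < ‖x - y‖} := by
          have : Continuous fun x : EuclideanSpace ℝ (Fin n) => ‖x - y‖ := by fun_prop
          exact isOpen_lt continuous_const this
        have hx₀mem : x₀ ∈ {x : EuclideanSpace ℝ (Fin n) | r < ‖x - y‖} := by
          simpa [dist_eq_norm, norm_sub_rev x₀ y] using hgt
        filter_upwards [hopen.mem_nhds hx₀mem] with x hx
        rw [max_eq_right (by nlinarith [hx, norm_nonneg (x - y)] : r^2 - ‖x - y‖^2 ≤ (0:ℝ))]
        ring
      exact HasFDerivAt.congr_of_eventuallyEq (hasFDerivAt_const 0 x₀) hev.symm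
  exact (hasFDerivAt_integral_of_dominated_loc_of_lip (ball_mem_nhds x₀ one_pos)
    (Filter.Eventually.of_forall hmeas) hFint hF'meas hlip hbound hdiff).2

private lemma pointwise_bound {n : ℕ} (hn : 1 ≤ n) {r : ℝ} (hr : 0 < r)
    {f : EuclideanSpace ℝ (Fin n) → ℝ} (hf : Continuous f)
    (hsupp : HasCompactSupport f)
    (hν : 0 < (volume (ball (0 : EuclideanSpace ℝ (Fin n)) 1)).toReal)
    (x : EuclideanSpace ℝ (Fin n)) :
    ‖(((n : ℝ) + 2) / ((volume (ball (0 : EuclideanSpace ℝ (Fin n)) 1)).toReal * r ^ (n + 2)))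
        • ∫ y in ball x r, (f y - f x) • (y - x)‖ ^ 2
      ≤ (((n : ℝ) + 2) / ((volume (ball (0 : EuclideanSpace ℝ (Fin n)) 1)).toReal * r ^ (n + 2)))
        * ∫ y in ball x r, (f y - f x) ^ 2 := by
  obtain ⟨C₀, hC₀⟩ := hsupp.exists_bound_of_continuous hf
  set ν := (volume (ball (0 : EuclideanSpace ℝ (Fin n)) 1)).toReal with hν_def
  set K := ((n : ℝ) + 2) / (ν * r ^ (n + 2)) with hK_def
  have hK : 0 < K := by
    apply div_pos (by positivity) (by positivity)
  set w := ∫ y in ball x r, (f y - f x) • (y - x) with hw_def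
  set Qc := ν * (r ^ (n + 2) / (n + 2)) with hQc_def
  have hQc : 0 < Qc := by positivity
  have hKQ : K * Qc = 1 := by
    rw [hK_def, hQc_def]
    field_simp
  set P := ∫ y in ball x r, (f y - f x) ^ 2 with hP_def
  have hP : 0 ≤ P := setIntegral_nonneg measurableSet_ball (fun y _ => sq_nonneg _)
  -- ‖w‖² as an integral
  have hwsq : ‖w‖ ^ 2 = ∫ y in ball x r, (f y - f x) * ⟪y - x, w⟫ := by
    have hint : Integrable (fun y => (f y - f x) • (y - x))
        ((volume : Measure (EuclideanSpace ℝ (Fin n))).restrict (ball x r)) :=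
      intOn_ball (by fun_prop) x r
    have := integral_inner (𝕜 := ℝ) hint w
    rw [hw_def] at this ⊢
    rw [← real_inner_self_eq_norm_sq, ← this]
    congr 1; ext y
    rw [real_inner_smul_right, real_inner_comm]
  have hin : Continuous fun y : EuclideanSpace ℝ (Fin n) => ⟪y - x, w⟫ :=
    (continuous_id.sub continuous_const).inner continuous_const
  have hmom : ∫ y in ball x r, ⟪y - x, w⟫ ^ 2 = ‖w‖ ^ 2 * Qc := by
    have hsh := shift_int (fun z => ⟪z, w⟫ ^ 2) x r
    rw [hsh, moment hn r hr w]
  have h2 : Real.HolderConjugate 2 2 := Real.HolderConjugate.two_two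
  haveI : IsFiniteMeasure
      ((volume : Measure (EuclideanSpace ℝ (Fin n))).restrict (ball x r)) := by
    constructor
    rw [Measure.restrict_apply_univ]
    exact measure_ball_lt_top
  have memg : MemLp (fun y => |f y - f x|) (ENNReal.ofReal 2)
      ((volume : Measure (EuclideanSpace ℝ (Fin n))).restrict (ball x r)) := by
    apply MemLp.of_bound ((hf.sub continuous_const).abs.aestronglyMeasurable.restrict) (2 * C₀)
    filter_upwards with y
    have h1 := hC₀ y; have h2 := hC₀ x
    rw [Real.norm_eq_abs] at h1 h2 ⊢
    rw [abs_abs]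
    calc |f y - f x| ≤ |f y| + |f x| := abs_sub _ _
      _ ≤ 2 * C₀ := by linarith
  have memh : MemLp (fun y => |⟪y - x, w⟫|) (ENNReal.ofReal 2)
      ((volume : Measure (EuclideanSpace ℝ (Fin n))).restrict (ball x r)) := by
    apply MemLp.of_bound
      (hin.abs.aestronglyMeasurable.restrict) (r * ‖w‖)
    filter_upwards [self_mem_ae_restrict measurableSet_ball] with y hy
    rw [Real.norm_eq_abs, abs_abs]
    calc |⟪y - x, w⟫| ≤ ‖y - x‖ * ‖w‖ := abs_real_inner_le_norm _ _
      _ ≤ r * ‖w‖ := by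
          apply mul_le_mul_of_nonneg_right _ (norm_nonneg w)
          rw [mem_ball, dist_eq_norm] at hy
          exact hy.le
  have hHold := integral_mul_le_Lp_mul_Lq_of_nonneg h2
    (Filter.Eventually.of_forall fun y => abs_nonneg _)
    (Filter.Eventually.of_forall fun y => abs_nonneg _) memg memh
  have e1 : ∫ y in ball x r, |f y - f x| ^ (2:ℝ) = P := by
    rw [hP_def]; congr 1; ext y; rw [Real.rpow_two, sq_abs]
  have e2 : ∫ y in ball x r, |⟪y - x, w⟫| ^ (2:ℝ) = ‖w‖ ^ 2 * Qc := by
    rw [← hmom]; congr 1; ext y; rw [Real.rpow_two, sq_abs]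
  have e3 : ∫ y in ball x r, (f y - f x) * ⟪y - x, w⟫
      ≤ ∫ y in ball x r, |f y - f x| * |⟪y - x, w⟫| := by
    apply integral_mono (intOn_ball ((hf.sub continuous_const).mul hin) x r)
      (intOn_ball ((hf.sub continuous_const).abs.mul hin.abs) x r)
    intro y; simp only [Pi.mul_apply, Pi.sub_apply]; rw [← abs_mul]; exact le_abs_self _
  have key : ‖w‖ ^ 2 ≤ Real.sqrt P * Real.sqrt (‖w‖ ^ 2 * Qc) := by
    rw [e1, e2] at hHold
    calc ‖w‖ ^ 2 = ∫ y in ball x r, (f y - f x) * ⟪y - x, w⟫ := hwsq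
      _ ≤ ∫ y in ball x r, |f y - f x| * |⟪y - x, w⟫| := e3
      _ ≤ P ^ (1/(2:ℝ)) * (‖w‖ ^ 2 * Qc) ^ (1/(2:ℝ)) := hHold
      _ = Real.sqrt P * Real.sqrt (‖w‖ ^ 2 * Qc) := by
          rw [Real.sqrt_eq_rpow, Real.sqrt_eq_rpow]
  have hsq : Real.sqrt (‖w‖ ^ 2 * Qc) = ‖w‖ * Real.sqrt Qc := by
    rw [Real.sqrt_mul (sq_nonneg _), Real.sqrt_sq (norm_nonneg _)]
  have hwle : ‖w‖ ^ 2 ≤ P * Qc := by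
    rcases eq_or_lt_of_le (norm_nonneg w) with h0 | h0
    · rw [← h0]
      norm_num
      exact mul_nonneg hP hQc.le
    · have hk2 : ‖w‖ * ‖w‖ ≤ (Real.sqrt P * Real.sqrt Qc) * ‖w‖ := by
        rw [hsq] at key; nlinarith [key]
      have h4 : ‖w‖ ≤ Real.sqrt P * Real.sqrt Qc := le_of_mul_le_mul_right hk2 h0
      calc ‖w‖ ^ 2 ≤ (Real.sqrt P * Real.sqrt Qc) ^ 2 :=
            pow_le_pow_left₀ (norm_nonneg w) h4 2
        _ = P * Qc := by rw [mul_pow, Real.sq_sqrt hP, Real.sq_sqrt hQc.le]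
  have hfin : (K * ‖w‖) ^ 2 ≤ K * P := by
    have hmul := mul_le_mul_of_nonneg_left hwle (by positivity : (0:ℝ) ≤ K ^ 2)
    calc (K * ‖w‖) ^ 2 = K ^ 2 * ‖w‖ ^ 2 := by ring
      _ ≤ K ^ 2 * (P * Qc) := hmul
      _ = (K * P) * (K * Qc) := by ring
      _ = K * P := by rw [hKQ]; ring
  calc ‖K • w‖ ^ 2 = (K * ‖w‖) ^ 2 := by
        rw [norm_smul, Real.norm_eq_abs, abs_of_pos hK]
    _ ≤ K * P := hfin

private lemma h_int {n : ℕ} {r : ℝ} (hr : 0 < r)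
    {f : EuclideanSpace ℝ (Fin n) → ℝ} (hf : Continuous f)
    (hsupp : HasCompactSupport f) :
    Integrable (fun x => ∫ y in ball x r, (f y - f x) ^ 2)
      (volume : Measure (EuclideanSpace ℝ (Fin n))) := by
  obtain ⟨C₀, hC₀⟩ := hsupp.exists_bound_of_continuous hf
  have hC₀0 : 0 ≤ C₀ := le_trans (norm_nonneg _) (hC₀ 0)
  set T := cthickening r (tsupport f) with hT
  have hTc : IsCompact T := hsupp.cthickening
  set volB := (volume (ball (0 : EuclideanSpace ℝ (Fin n)) r)).toReal with hvolB
  have hvolB0 : 0 ≤ volB := ENNReal.toReal_nonneg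
  -- measurability
  have hWm : StronglyMeasurable (fun p : EuclideanSpace ℝ (Fin n) × EuclideanSpace ℝ (Fin n) =>
      if dist p.2 p.1 < r then (f p.2 - f p.1) ^ 2 else 0) := by
    apply Measurable.stronglyMeasurable
    refine Measurable.ite ?_ ?_ measurable_const
    · exact measurableSet_lt (continuous_snd.dist continuous_fst).measurable measurable_const
    · exact (((hf.comp continuous_snd).sub (hf.comp continuous_fst)).pow 2).measurable
  have heq : (fun x => ∫ y in ball x r, (f y - f x) ^ 2)
      = fun x : EuclideanSpace ℝ (Fin n) =>
        ∫ y, if dist y x < r then (f y - f x) ^ 2 else 0 := by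
    funext x
    rw [← integral_indicator measurableSet_ball]
    congr 1
  have hsm : AEStronglyMeasurable (fun x => ∫ y in ball x r, (f y - f x) ^ 2)
      (volume : Measure (EuclideanSpace ℝ (Fin n))) := by
    rw [heq]
    exact hWm.integral_prod_right'.aestronglyMeasurable
  -- bounding function
  have hbd_int : Integrable (fun x => ((2 * C₀) ^ 2 * volB) *
      Set.indicator T (fun _ => (1:ℝ)) x)
      (volume : Measure (EuclideanSpace ℝ (Fin n))) := by
    apply Integrable.const_mul
    rw [integrable_indicator_iff hTc.measurableSet]
    exact integrableOn_const hTc.measure_lt_top.ne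
  apply Integrable.mono' hbd_int hsm
  filter_upwards with x
  by_cases hx : x ∈ T
  · have hnonneg : 0 ≤ ∫ y in ball x r, (f y - f x) ^ 2 :=
      setIntegral_nonneg measurableSet_ball (fun y _ => sq_nonneg _)
    rw [Real.norm_eq_abs, abs_of_nonneg hnonneg, Set.indicator_of_mem hx, mul_one]
    have hb : ‖∫ y in ball x r, (f y - f x) ^ 2‖ ≤ (2 * C₀) ^ 2 * (volume (ball x r)).toReal := by
      apply norm_setIntegral_le_of_norm_le_const measure_ball_lt_top
      intro y _
      rw [Real.norm_eq_abs, abs_of_nonneg (sq_nonneg _)]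
      have h1 := hC₀ y; have h2 := hC₀ x
      rw [Real.norm_eq_abs] at h1 h2
      nlinarith [abs_nonneg (f y), abs_nonneg (f x), le_abs_self (f y), neg_abs_le (f y),
        le_abs_self (f x), neg_abs_le (f x)]
    rw [Real.norm_eq_abs, abs_of_nonneg hnonneg] at hb
    rwa [Measure.addHaar_ball_center volume x r] at hb
  · have hzero : ∀ y ∈ ball x r, (f y - f x) ^ 2 = 0 := by
      intro y hy
      have hfx : f x = 0 := by
        apply image_eq_zero_of_notMem_tsupport
        exact fun hmem => hx (self_subset_cthickening _ hmem)
      have hfy : f y = 0 := by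
        apply image_eq_zero_of_notMem_tsupport
        intro hmem
        apply hx
        apply thickening_subset_cthickening r (tsupport f)
        rw [mem_thickening_iff]
        exact ⟨y, hmem, by rw [mem_ball] at hy; rw [dist_comm]; exact hy⟩
      rw [hfx, hfy]; ring
    have : ∫ y in ball x r, (f y - f x) ^ 2 = 0 := by
      rw [setIntegral_congr_fun measurableSet_ball hzero, integral_zero]
    rw [this, Set.indicator_of_notMem hx, mul_zero]
    simp


/-- Gradient formula and `L²` gradient bound for the Euclidean smoothing operator
`Λ_r f(x) = ∫ k_r(x,y) f(y) dy` with kernel `k_r(x,y) = r^{-n} ψ(‖x-y‖/r)`,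
`ψ(t) = ((n+2)/(2ν_n))(1-t²)` on `[0,1]`, `ψ = 0` on `(1,∞)`:
`∇(Λ_r f)(x) = ((n+2)/(ν_n r^{n+2})) ∫_{B_r(x)} (f(y)-f(x))·(y-x) dy`, and
`∫ ‖∇(Λ_r f)‖² ≤ ((n+2)/(ν_n r^{n+2})) ∬_{B_r(x)} (f(y)-f(x))² dy dx`. -/
theorem smoothing_gradient_bound (n : ℕ) (hn : 1 ≤ n) (r : ℝ) (hr : 0 < r)
    (ψ : ℝ → ℝ)
    (hψ₁ : ∀ t : ℝ, 0 ≤ t → t ≤ 1 →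
      ψ t = (((n : ℝ) + 2) /
          (2 * (volume (Metric.ball (0 : EuclideanSpace ℝ (Fin n)) 1)).toReal))
        * (1 - t ^ 2))
    (hψ₂ : ∀ t : ℝ, 1 < t → ψ t = 0)
    (f : EuclideanSpace ℝ (Fin n) → ℝ) (hf : Continuous f)
    (hsupp : HasCompactSupport f)
    (Λ : EuclideanSpace ℝ (Fin n) → ℝ)
    (hΛ : ∀ x, Λ x = ∫ y, ((r : ℝ) ^ n)⁻¹ * ψ (‖x - y‖ / r) * f y) :
    (∀ x, HasGradientAt Λ
        (((((n : ℝ) + 2) /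
            ((volume (Metric.ball (0 : EuclideanSpace ℝ (Fin n)) 1)).toReal * r ^ (n + 2)))) •
          ∫ y in Metric.ball x r, (f y - f x) • (y - x)) x)
    ∧ ∫ x, ‖gradient Λ x‖ ^ 2
        ≤ (((n : ℝ) + 2) /
            ((volume (Metric.ball (0 : EuclideanSpace ℝ (Fin n)) 1)).toReal * r ^ (n + 2)))
          * ∫ x, ∫ y in Metric.ball x r, (f y - f x) ^ 2 := by
  have hν : 0 < (volume (ball (0 : EuclideanSpace ℝ (Fin n)) 1)).toReal :=
    ENNReal.toReal_pos (measure_ball_pos volume 0 one_pos).ne' measure_ball_lt_top.ne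
  set ν := (volume (ball (0 : EuclideanSpace ℝ (Fin n)) 1)).toReal with hν_def
  set K := ((n : ℝ) + 2) / (ν * r ^ (n + 2)) with hK_def
  set c := ((n : ℝ) + 2) / (2 * ν * r ^ (n + 2)) with hc_def
  have hKc : K = 2 * c := by rw [hK_def, hc_def]; field_simp
  -- rewrite Λ
  have hΛeq : Λ = fun x => c * ∫ y, max (r ^ 2 - ‖x - y‖ ^ 2) 0 * f y := by
    funext x
    rw [hΛ x, ← integral_const_mul]
    congr 1
    funext y
    rcases le_or_gt (‖x - y‖) r with hle | hgt
    · have ht0 : 0 ≤ ‖x - y‖ / r := by positivity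
      have ht1 : ‖x - y‖ / r ≤ 1 := by rw [div_le_one hr]; exact hle
      rw [hψ₁ _ ht0 ht1,
        max_eq_left (by nlinarith [norm_nonneg (x - y)] : (0:ℝ) ≤ r ^ 2 - ‖x - y‖ ^ 2)]
      rw [hc_def, div_pow]
      have hrn : (r : ℝ) ^ n ≠ 0 := by positivity
      have hr2 : (r : ℝ) ^ 2 ≠ 0 := by positivity
      have hνne : ν ≠ 0 := hν.ne'
      field_simp
      ring
    · have h1 : 1 < ‖x - y‖ / r := by rw [lt_div_iff₀ hr]; simpa using hgt
      rw [hψ₂ _ h1,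
        max_eq_right (by nlinarith [norm_nonneg (x - y)] : r ^ 2 - ‖x - y‖ ^ 2 ≤ (0:ℝ))]
      ring
  -- Part 1
  have part1 : ∀ x, HasGradientAt Λ
      (K • ∫ y in ball x r, (f y - f x) • (y - x)) x := by
    intro x
    rw [hasGradientAt_iff_hasFDerivAt, hΛeq]
    have hD := (grad_phi hn hr hf hsupp x).const_mul c
    have hInd : (∫ y, Set.indicator (ball x r)
          (fun y => (2 * f y) • (innerSL ℝ (y - x))) y)
        = innerSL ℝ (∫ y in ball x r, (2 * f y) • (y - x)) := by
      rw [integral_indicator measurableSet_ball]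
      have : ∀ y : EuclideanSpace ℝ (Fin n),
          (2 * f y) • (innerSL ℝ (y - x)) = innerSL ℝ ((2 * f y) • (y - x)) := by
        intro y; rw [_root_.map_smul]
      rw [show (fun y => (2 * f y) • (innerSL ℝ (y - x)))
          = fun y => innerSL ℝ ((2 * f y) • (y - x)) from funext this]
      exact ContinuousLinearMap.integral_comp_comm (innerSL ℝ)
        (intOn_ball (by fun_prop) x r)
    have hshift : (∫ y in ball x r, (2 * f y) • (y - x))
        = (2 : ℝ) • ∫ y in ball x r, (f y - f x) • (y - x) := by
      have e1 : ∀ y : EuclideanSpace ℝ (Fin n),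
          (2 * f y) • (y - x) = (2:ℝ) • ((f y - f x) • (y - x)) + (2 * f x) • (y - x) := by
        intro y
        rw [smul_smul, ← add_smul]
        congr 1
        ring
      rw [show (fun y : EuclideanSpace ℝ (Fin n) => (2 * f y) • (y - x))
          = fun y => (2:ℝ) • ((f y - f x) • (y - x)) + (2 * f x) • (y - x) from funext e1]
      rw [integral_add]
      · have h0 : (∫ y in ball x r, (2 * f x) • (y - x))
            = (0 : EuclideanSpace ℝ (Fin n)) := by
          rw [integral_smul, ball_mean_zero, smul_zero]
        rw [h0, add_zero, integral_smul]
      · exact (intOn_ball (g := fun y => (f y - f x) • (y - x)) (by fun_prop) x r).smul (2:ℝ)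
      · exact intOn_ball (g := fun y => (2 * f x) • (y - x)) (by fun_prop) x r
    rw [hInd, hshift] at hD
    refine hD.congr_fderiv ?_; symm
    ext v
    simp only [InnerProductSpace.toDual_apply_apply, ContinuousLinearMap.smul_apply,
      innerSL_apply_apply, inner_smul_left, _root_.map_smul, conj_trivial]
    rw [hKc]
    simp [inner_smul_left]
    ring
  refine ⟨part1, ?_⟩
  -- Part 2
  have hgrad : ∀ x, gradient Λ x = K • ∫ y in ball x r, (f y - f x) • (y - x) :=
    fun x => (part1 x).gradient
  have hmono : ∫ x, ‖gradient Λ x‖ ^ 2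
      ≤ ∫ x, K * ∫ y in ball x r, (f y - f x) ^ 2 := by
    apply integral_mono_of_nonneg
    · filter_upwards with x; positivity
    · exact (h_int hr hf hsupp).const_mul K
    · filter_upwards with x
      rw [hgrad x]
      exact pointwise_bound hn hr hf hsupp hν x
  calc ∫ x, ‖gradient Λ x‖ ^ 2 ≤ ∫ x, K * ∫ y in ball x r, (f y - f x) ^ 2 := hmono
    _ = K * ∫ x, ∫ y in ball x r, (f y - f x) ^ 2 := integral_const_mul K _
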